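/- arXiv:1012.4250 — 3 statements merged into one kernel-verified Lean document; each statement's English description precedes it below -/
import Mathlib

section
/- Let δ ≥ 0 and consider a channel with finite input alphabet {x_1,…,x_n}, finite output alphabet {y_1,…,y_m}, prior p(·), and conditional probabilities p(·|·). Suppose there is a distinguished input x* such that for every input x and every output y, p(y|x) ≤ e^{2δ} · p(y|x*) (the bound that pointwise δ-differential privacy imposes on the rows of the channel of true answers to reported answers). Then the Rényi min mutual information satisfies I_∞(X;Y) ≤ 2δ · log₂(e). -/
/-- If the rows of a channel satisfy the bound imposed by pointwise δ-differential
privacy with respect to a distinguished input `xstar`, then the Rényi min mutual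
information `I_∞(X;Y) = H_∞(X) - H_∞(X|Y)` is bounded by `2δ log₂ e`. -/
theorem dp_bounds_renyi_min_mutual_information
    {X Y : Type*} [Fintype X] [Fintype Y] [Nonempty X] [Nonempty Y]
    (δ : ℝ) (hδ : 0 ≤ δ)
    (p : X → ℝ) (hp : ∀ x, 0 ≤ p x) (hp1 : ∑ x, p x = 1) (hppos : ∃ x, 0 < p x)
    (Q : X → Y → ℝ) (hQ : ∀ x y, 0 ≤ Q x y) (hQ1 : ∀ x, ∑ y, Q x y = 1)
    (xstar : X)
    (hub : ∀ x y, Q x y ≤ Real.exp (2 * δ) * Q xstar y) :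
    (-Real.logb 2 (⨆ x, p x)) - (-Real.logb 2 (∑ y, ⨆ x, p x * Q x y)) ≤
      2 * δ * Real.logb 2 (Real.exp 1) := by
  obtain ⟨x0, hx0⟩ := hppos
  have hbdd : ∀ (f : X → ℝ), BddAbove (Set.range f) := fun f => Set.Finite.bddAbove (Set.finite_range f)
  have hM : 0 < ⨆ x, p x := lt_of_lt_of_le hx0 (le_ciSup (hbdd p) x0)
  have hMle : ∀ x, p x ≤ ⨆ x, p x := fun x => le_ciSup (hbdd p) x
  -- positivity of the sum
  have hy0 : ∃ y, 0 < Q x0 y := by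
    by_contra h
    push_neg at h
    have : ∑ y, Q x0 y = 0 := by
      apply Finset.sum_eq_zero
      intro y _
      exact le_antisymm (h y) (hQ x0 y)
    rw [hQ1 x0] at this
    norm_num at this
  obtain ⟨y0, hy0⟩ := hy0
  have hterm_nonneg : ∀ y, 0 ≤ ⨆ x, p x * Q x y := by
    intro y
    exact le_trans (mul_nonneg (hp x0) (hQ x0 y)) (le_ciSup (hbdd (fun x => p x * Q x y)) x0)
  have hSpos : 0 < ∑ y, ⨆ x, p x * Q x y := by
    apply Finset.sum_pos' (fun y _ => hterm_nonneg y)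
    exact ⟨y0, Finset.mem_univ y0, lt_of_lt_of_le (mul_pos hx0 hy0) (le_ciSup (hbdd (fun x => p x * Q x y0)) x0)⟩
  -- key bound
  have hSle : (∑ y, ⨆ x, p x * Q x y) ≤ Real.exp (2 * δ) * (⨆ x, p x) := by
    calc (∑ y, ⨆ x, p x * Q x y)
        ≤ ∑ y, Real.exp (2 * δ) * ((⨆ x, p x) * Q xstar y) := by
          apply Finset.sum_le_sum
          intro y _
          apply ciSup_le
          intro x
          calc p x * Q x y ≤ (⨆ x, p x) * (Real.exp (2 * δ) * Q xstar y) :=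
                mul_le_mul (hMle x) (hub x y) (hQ x y) hM.le
            _ = Real.exp (2 * δ) * ((⨆ x, p x) * Q xstar y) := by ring
      _ = Real.exp (2 * δ) * (⨆ x, p x) := by
          rw [← Finset.mul_sum, ← Finset.mul_sum, hQ1 xstar]
          ring
  have hlog : Real.logb 2 (∑ y, ⨆ x, p x * Q x y) ≤
      Real.logb 2 (Real.exp (2 * δ) * (⨆ x, p x)) :=
    Real.logb_le_logb_of_le (by norm_num) hSpos hSle
  rw [Real.logb_mul (Real.exp_pos _).ne' hM.ne'] at hlog
  have h1 : Real.logb 2 (Real.exp (2 * δ)) = (2 * δ) * Real.logb 2 (Real.exp 1) := by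
    unfold Real.logb
    rw [Real.log_exp, Real.log_exp]
    ring
  linarith
end

section
/- Let δ ≥ 0 and consider a channel with finite input alphabet {x_1,…,x_n}, finite output alphabet {y_1,…,y_m}, prior p(·), and conditional probabilities p(·|·). Suppose there is a distinguished input x* such that p(y|x) ≤ e^{2δ} · p(y|x*) for every input x and output y. Then Σ_y max_x p(x) p(y|x) ≤ e^{2δ} · max_x p(x); equivalently, the conditional Rényi min-entropy satisfies H_∞(X|Y) ≥ −2δ · log₂(e) − log₂ max_x p(x). -/
/-- If the rows of a channel satisfy the bound imposed by pointwise δ-differential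
privacy with respect to a distinguished input `xstar`, then
`Σ_y max_x p(x) p(y|x) ≤ e^{2δ} max_x p(x)`; equivalently, the conditional Rényi
min-entropy satisfies `H_∞(X|Y) ≥ -2δ log₂ e - log₂ max_x p(x)`. -/
theorem dp_bounds_conditional_min_entropy
    {X Y : Type*} [Fintype X] [Fintype Y] [Nonempty X] [Nonempty Y]
    (δ : ℝ) (hδ : 0 ≤ δ)
    (p : X → ℝ) (hp : ∀ x, 0 ≤ p x) (hp1 : ∑ x, p x = 1) (hppos : ∃ x, 0 < p x)
    (Q : X → Y → ℝ) (hQ : ∀ x y, 0 ≤ Q x y) (hQ1 : ∀ x, ∑ y, Q x y = 1)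
    (xstar : X)
    (hub : ∀ x y, Q x y ≤ Real.exp (2 * δ) * Q xstar y) :
    (∑ y, ⨆ x, p x * Q x y) ≤ Real.exp (2 * δ) * (⨆ x, p x) ∧
      -Real.logb 2 (∑ y, ⨆ x, p x * Q x y) ≥
        -(2 * δ) * Real.logb 2 (Real.exp 1) - Real.logb 2 (⨆ x, p x) := by
  obtain ⟨x0, hx0⟩ := hppos
  set M : ℝ := ⨆ x, p x with hM
  have hMx : ∀ x, p x ≤ M := fun x => le_ciSup (Set.Finite.bddAbove (Set.finite_range p)) x
  have hMpos : 0 < M := lt_of_lt_of_le hx0 (hMx x0)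
  -- pointwise bound on the suprema
  have hsup : ∀ y : Y, (⨆ x, p x * Q x y) ≤ Real.exp (2 * δ) * Q xstar y * M := by
    intro y
    refine ciSup_le fun x => ?_
    calc p x * Q x y ≤ p x * (Real.exp (2 * δ) * Q xstar y) :=
          mul_le_mul_of_nonneg_left (hub x y) (hp x)
      _ = Real.exp (2 * δ) * Q xstar y * p x := by ring
      _ ≤ Real.exp (2 * δ) * Q xstar y * M :=
          mul_le_mul_of_nonneg_left (hMx x)
            (mul_nonneg (Real.exp_pos _).le (hQ xstar y))
  have hsum : (∑ y, ⨆ x, p x * Q x y) ≤ Real.exp (2 * δ) * M := by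
    calc (∑ y, ⨆ x, p x * Q x y) ≤ ∑ y, Real.exp (2 * δ) * Q xstar y * M :=
          Finset.sum_le_sum fun y _ => hsup y
      _ = Real.exp (2 * δ) * M * ∑ y, Q xstar y := by
          rw [Finset.mul_sum]; apply Finset.sum_congr rfl; intro y _; ring
      _ = Real.exp (2 * δ) * M := by rw [hQ1 xstar, mul_one]
  refine ⟨hsum, ?_⟩
  -- positivity of the sum
  have hy : ∃ y, 0 < Q x0 y := by
    by_contra h
    push_neg at h
    have : (∑ y, Q x0 y) = 0 := le_antisymm (Finset.sum_nonpos fun y _ => h y)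
      (Finset.sum_nonneg fun y _ => hQ x0 y)
    rw [hQ1 x0] at this; norm_num at this
  obtain ⟨y0, hy0⟩ := hy
  have hsuppos : ∀ y, 0 ≤ ⨆ x, p x * Q x y := fun y =>
    le_trans (mul_nonneg (hp x0) (hQ x0 y))
      (le_ciSup (f := fun x => p x * Q x y) (Set.Finite.bddAbove (Set.finite_range _)) x0)
  have hSpos : 0 < ∑ y, ⨆ x, p x * Q x y := by
    have h1 : 0 < ⨆ x, p x * Q x y0 :=
      lt_of_lt_of_le (mul_pos hx0 hy0)
        (le_ciSup (f := fun x => p x * Q x y0) (Set.Finite.bddAbove (Set.finite_range _)) x0)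
    exact Finset.sum_pos' (fun y _ => hsuppos y) ⟨y0, Finset.mem_univ y0, h1⟩
  have hlog : Real.logb 2 (∑ y, ⨆ x, p x * Q x y) ≤
      Real.logb 2 (Real.exp (2 * δ) * M) :=
    Real.logb_le_logb_of_le (by norm_num) hSpos hsum
  have hexpand : Real.logb 2 (Real.exp (2 * δ) * M) =
      (2 * δ) * Real.logb 2 (Real.exp 1) + Real.logb 2 M := by
    rw [Real.logb_mul (Real.exp_pos _).ne' hMpos.ne']
    congr 1
    simp [Real.logb, Real.log_exp]
    ring
  linarith [hlog, hexpand.le, hexpand.ge]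
end

section
/- Fix integers n ≥ 3, m ≥ 2 and a real β with 0 < β < 1. Consider the channel with inputs x_1,…,x_n and outputs y_1,…,y_m whose matrix is p(y_1|x_1) = β, p(y_j|x_1) = (1−β)/(m−1) for 2 ≤ j ≤ m, and p(y_j|x_i) = 1/m for all 2 ≤ i ≤ n and 1 ≤ j ≤ m, equipped with the prior p(x_1) = α and p(x_i) = (1−α)/(n−1) for 2 ≤ i ≤ n, where 0 < α < 1. Then the Rényi min mutual information I_∞(X;Y) tends to 0 as α → 0⁺ (for every fixed value of β); indeed, for all sufficiently small α > 0 one has I_∞(X;Y) = 0. -/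
/-- For the channel of Example 1 (row `x_1` equals `(β, (1-β)/(m-1), …)`, all other
rows uniform `1/m`), with prior `p(x_1) = α`, `p(x_i) = (1-α)/(n-1)` for `i ≥ 2`, the
Rényi min mutual information `I_∞(X;Y)` tends to `0` as `α → 0⁺`, for every fixed
`β`; indeed, for all sufficiently small `α > 0` it equals `0`. -/
theorem example1_renyi_min_mutual_information_tendsto_zero
    (n m : ℕ) (hn : 3 ≤ n) (hm : 2 ≤ m)
    (β : ℝ) (hβ0 : 0 < β) (hβ1 : β < 1) :
    let Q : Fin n → Fin m → ℝ := fun i j =>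
      if i = (⟨0, by omega⟩ : Fin n) then
        (if j = (⟨0, by omega⟩ : Fin m) then β else (1 - β) / ((m : ℝ) - 1))
      else 1 / (m : ℝ)
    let Iinf : ℝ → ℝ := fun α =>
      let p : Fin n → ℝ := fun i =>
        if i = (⟨0, by omega⟩ : Fin n) then α else (1 - α) / ((n : ℝ) - 1)
      (-Real.logb 2 (⨆ i, p i)) - (-Real.logb 2 (∑ j, ⨆ i, p i * Q i j))
    Filter.Tendsto Iinf (nhdsWithin 0 (Set.Ioi 0)) (nhds 0) ∧
      ∀ᶠ α in nhdsWithin (0 : ℝ) (Set.Ioi 0), Iinf α = 0 := by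
  intro Q Iinf
  haveI : Nonempty (Fin n) := ⟨⟨0, by omega⟩⟩
  have hn3 : (3 : ℝ) ≤ (n : ℝ) := by exact_mod_cast hn
  have hm2 : (2 : ℝ) ≤ (m : ℝ) := by exact_mod_cast hm
  have hnm : (0 : ℝ) < n * m := by positivity
  have key : ∀ α : ℝ, 0 < α → α < 1 / ((n : ℝ) * m) → Iinf α = 0 := by
    intro α hα0 hαε
    have hαnm : α * ((n : ℝ) * m) < 1 := by
      rw [lt_div_iff₀ hnm] at hαε; linarith
    -- basic inequality: α * ((n-1)*m) ≤ 1 - α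
    have hmain : α * (((n : ℝ) - 1) * m) ≤ 1 - α := by nlinarith
    have hα1 : α < 1 := by nlinarith
    set p : Fin n → ℝ := fun i =>
      if i = (⟨0, by omega⟩ : Fin n) then α else (1 - α) / ((n : ℝ) - 1) with hp
    have hn1 : (0 : ℝ) < (n : ℝ) - 1 := by linarith
    have hm1 : (0 : ℝ) < (m : ℝ) - 1 := by linarith
    have hmpos : (0 : ℝ) < (m : ℝ) := by linarith
    have hQle : ∀ j : Fin m, Q (⟨0, by omega⟩ : Fin n) j ≤ 1 := by
      intro j
      simp only [Q, if_pos rfl]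
      split
      · linarith
      · rw [div_le_one hm1]; linarith
    have hαle : α ≤ (1 - α) / ((n : ℝ) - 1) := by
      rw [le_div_iff₀ hn1]; nlinarith
    have hαle' : α ≤ (1 - α) / ((n : ℝ) - 1) * (1 / m) := by
      rw [div_mul_div_comm, mul_one, le_div_iff₀ (by positivity)]; linarith
    have i1 : Fin n := ⟨1, by omega⟩
    have hi1 : (⟨1, by omega⟩ : Fin n) ≠ (⟨0, by omega⟩ : Fin n) := by
      simp [Fin.ext_iff]
    have hsup1 : (⨆ i, p i) = (1 - α) / ((n : ℝ) - 1) := by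
      apply le_antisymm
      · apply ciSup_le
        intro i
        simp only [hp]
        split
        · exact hαle
        · exact le_rfl
      · have := le_ciSup (Set.Finite.bddAbove (Set.finite_range p)) (⟨1, by omega⟩ : Fin n)
        simpa [hp, hi1] using this
    have hsup2 : ∀ j : Fin m, (⨆ i, p i * Q i j) = (1 - α) / ((n : ℝ) - 1) * (1 / m) := by
      intro j
      apply le_antisymm
      · apply ciSup_le
        intro i
        by_cases hi : i = (⟨0, by omega⟩ : Fin n)
        · subst hi
          simp only [hp, if_pos rfl]
          calc α * Q (⟨0, by omega⟩ : Fin n) j ≤ α * 1 :=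
                mul_le_mul_of_nonneg_left (hQle j) hα0.le
            _ = α := mul_one α
            _ ≤ _ := hαle'
        · simp only [hp, Q, if_neg hi]
          exact le_rfl
      · have := le_ciSup (Set.Finite.bddAbove (Set.finite_range (fun i => p i * Q i j)))
          (⟨1, by omega⟩ : Fin n)
        simpa [hp, Q, hi1] using this
    have hsum : (∑ j, ⨆ i, p i * Q i j) = (1 - α) / ((n : ℝ) - 1) := by
      rw [Finset.sum_congr rfl (fun j _ => hsup2 j)]
      rw [Finset.sum_const, Finset.card_univ, Fintype.card_fin, nsmul_eq_mul]
      field_simp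
    show (-Real.logb 2 (⨆ i, p i)) - (-Real.logb 2 (∑ j, ⨆ i, p i * Q i j)) = 0
    rw [hsup1, hsum]; ring

  have hmem : Set.Ioo (0 : ℝ) (1 / ((n : ℝ) * m)) ∈ nhdsWithin (0 : ℝ) (Set.Ioi 0) := by
    apply Ioo_mem_nhdsGT_of_mem
    exact ⟨le_rfl, by positivity⟩
  have hev : ∀ᶠ α in nhdsWithin (0 : ℝ) (Set.Ioi 0), Iinf α = 0 := by
    filter_upwards [hmem] with α hα
    exact key α hα.1 hα.2
  exact ⟨Filter.Tendsto.congr' (hev.mono fun x h => h.symm) tendsto_const_nhds, hev⟩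
end
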